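/- arXiv:1702.03889 — 7 statements merged into one kernel-verified Lean document; each statement's English description precedes it below -/
import Mathlib

section
/- Let 𝔤 be a real Lie algebra, Z a 𝔤-module and B ⊆ Z a Lie submodule such that 𝔤 acts trivially on the quotient Z/B (i.e. Y • z ∈ B for all Y ∈ 𝔤, z ∈ Z). The following are equivalent: (i) B|Z; (ii) the composite Z^𝔤 ⊆ Z → Z/B is surjective; (iii) there exists a Lie submodule H of Z with Z = B ⊕ H (internal direct sum of Lie submodules). Moreover, when these hold, any such H is a trivial 𝔤-module and the quotient map restricts to an isomorphism H ≅ Z/B. -/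
instance trivLRM (𝔤 : Type*) [LieRing 𝔤] : LieRingModule 𝔤 ℝ where
  bracket _ _ := 0
  add_lie := by intros; simp
  lie_add := by intros; simp
  leibniz_lie := by intros; simp

@[simp] lemma trivLRM_bracket (𝔤 : Type*) [LieRing 𝔤] (Y : 𝔤) (r : ℝ) :
    ⁅Y, r⁆ = 0 := rfl

instance trivLM (𝔤 : Type*) [LieRing 𝔤] [LieAlgebra ℝ 𝔤] : LieModule ℝ 𝔤 ℝ where
  smul_lie := by intros; simp
  lie_smul := by intros; simp



/-- For a Lie submodule `N` of a `𝔤`-module `M`, the condition `N|M`: for every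
finite-dimensional `𝔤`-module `V`, postcomposition with the quotient map
`Hom_𝔤(V, M) → Hom_𝔤(V, M/N)` is surjective. -/
def LieSplit (𝔤 : Type*) [LieRing 𝔤] [LieAlgebra ℝ 𝔤]
    {M : Type*} [AddCommGroup M] [Module ℝ M] [LieRingModule 𝔤 M] [LieModule ℝ 𝔤 M]
    (N : LieSubmodule ℝ 𝔤 M) : Prop :=
  ∀ (V : Type) [AddCommGroup V] [Module ℝ V] [LieRingModule 𝔤 V] [LieModule ℝ 𝔤 V]
    [FiniteDimensional ℝ V],
    Function.Surjective
      (fun f : V →ₗ⁅ℝ,𝔤⁆ M => (LieSubmodule.Quotient.mk' N).comp f :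
        (V →ₗ⁅ℝ,𝔤⁆ M) → (V →ₗ⁅ℝ,𝔤⁆ M ⧸ N))

/-- **Characterizations of the split condition `B|Z` when `𝔤` acts trivially on `Z/B`.**
The following are equivalent: (i) `B|Z`; (ii) the composite `Z^𝔤 ⊆ Z → Z/B` is
surjective; (iii) `B` admits a complementary Lie submodule `H` of `Z`.  Moreover, in
that case any such complement `H` is a trivial `𝔤`-module and the quotient map restricts
to an isomorphism `H ≅ Z/B`. -/
theorem stmt6 (𝔤 : Type*) [LieRing 𝔤] [LieAlgebra ℝ 𝔤]
    (Z : Type*) [AddCommGroup Z] [Module ℝ Z] [LieRingModule 𝔤 Z] [LieModule ℝ 𝔤 Z]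
    (B : LieSubmodule ℝ 𝔤 Z)
    (htriv : ∀ (Y : 𝔤) (z : Z), ⁅Y, z⁆ ∈ B) :
    (LieSplit 𝔤 B ↔
      ∀ y : Z ⧸ B, ∃ z ∈ LieModule.maxTrivSubmodule ℝ 𝔤 Z,
        LieSubmodule.Quotient.mk' B z = y) ∧
    (LieSplit 𝔤 B ↔ ∃ H : LieSubmodule ℝ 𝔤 Z, IsCompl B H) ∧
    (LieSplit 𝔤 B →
      ∀ H : LieSubmodule ℝ 𝔤 Z, IsCompl B H →
        (∀ (Y : 𝔤) (h : H), ⁅Y, (h : Z)⁆ = 0) ∧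
        Function.Bijective
          (fun h : H => LieSubmodule.Quotient.mk' B (h : Z))) := by
  have hq : ∀ (Y : 𝔤) (q : Z ⧸ B), ⁅Y, q⁆ = 0 := by
    intro Y q
    obtain ⟨z, rfl⟩ := LieSubmodule.Quotient.surjective_mk' B q
    rw [← LieModuleHom.map_lie, LieSubmodule.Quotient.mk_eq_zero]
    exact htriv Y z
  set P2 : Prop := ∀ y : Z ⧸ B, ∃ z ∈ LieModule.maxTrivSubmodule ℝ 𝔤 Z,
      LieSubmodule.Quotient.mk' B z = y with hP2
  -- (i) → (ii)
  have h12 : LieSplit 𝔤 B → P2 := by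
    intro hs y
    let f : ℝ →ₗ⁅ℝ,𝔤⁆ Z ⧸ B :=
      { toLinearMap := LinearMap.toSpanSingleton ℝ _ y
        map_lie' := by intro Y r; simp [hq] }
    obtain ⟨g, hg⟩ := hs ℝ f
    refine ⟨g 1, ?_, ?_⟩
    · rw [LieModule.mem_maxTrivSubmodule]
      intro Y
      have : g ⁅Y, (1:ℝ)⁆ = ⁅Y, g 1⁆ := g.map_lie Y 1
      simpa using this.symm
    · have := congrArg (fun k => k (1:ℝ)) hg
      simpa [f, LieModuleHom.comp_apply] using this
  -- (ii) → (i)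
  have h21 : P2 → LieSplit 𝔤 B := by
    intro h2 V _ _ _ _ _ f
    set Tm : Submodule ℝ Z := (LieModule.maxTrivSubmodule ℝ 𝔤 Z : Submodule ℝ Z)
    let T : Tm →ₗ[ℝ] Z ⧸ B :=
      (LieSubmodule.Quotient.mk' B).toLinearMap.comp Tm.subtype
    have hTsurj : LinearMap.range T = ⊤ := by
      rw [LinearMap.range_eq_top]
      intro y
      obtain ⟨z, hz, hz'⟩ := h2 y
      exact ⟨⟨z, hz⟩, hz'⟩
    obtain ⟨s, hs⟩ := T.exists_rightInverse_of_surjective hTsurj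
    refine ⟨{ toLinearMap := Tm.subtype.comp (s.comp (f : V →ₗ[ℝ] Z ⧸ B))
              map_lie' := ?_ }, ?_⟩
    · intro Y v
      have h1 : f ⁅Y, v⁆ = 0 := by rw [f.map_lie]; exact hq Y (f v)
      have h2' : ⁅Y, (s (f v) : Z)⁆ = 0 :=
        (LieModule.mem_maxTrivSubmodule ℝ 𝔤 Z _).mp (s (f v)).2 Y
      simp [h1, h2']
    · ext v
      have := congrArg (fun k => k (f v)) hs
      simpa [T, LieModuleHom.comp_apply] using this
  -- (ii) → (iii)
  have h23 : P2 → ∃ H : LieSubmodule ℝ 𝔤 Z, IsCompl B H := by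
    intro h2
    set Tm : Submodule ℝ Z := (LieModule.maxTrivSubmodule ℝ 𝔤 Z : Submodule ℝ Z)
    let T : Tm →ₗ[ℝ] Z ⧸ B :=
      (LieSubmodule.Quotient.mk' B).toLinearMap.comp Tm.subtype
    have hTsurj : LinearMap.range T = ⊤ := by
      rw [LinearMap.range_eq_top]
      intro y
      obtain ⟨z, hz, hz'⟩ := h2 y
      exact ⟨⟨z, hz⟩, hz'⟩
    obtain ⟨s, hs⟩ := T.exists_rightInverse_of_surjective hTsurj
    have hTs : ∀ q, T (s q) = q := fun q => congrArg (fun k => k q) hs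
    refine ⟨{ toSubmodule := Submodule.map Tm.subtype (LinearMap.range s)
              lie_mem := ?_ }, ?_⟩
    · rintro Y z ⟨a, -, rfl⟩
      have : ⁅Y, (a : Z)⁆ = 0 := (LieModule.mem_maxTrivSubmodule ℝ 𝔤 Z _).mp a.2 Y
      rw [show Tm.subtype a = (a : Z) from rfl, this]
      exact (Submodule.map Tm.subtype (LinearMap.range s)).zero_mem
    · constructor
      · rw [disjoint_iff, LieSubmodule.eq_bot_iff]
        intro m hm
        rw [LieSubmodule.mem_inf] at hm
        obtain ⟨hmB, a, ⟨q, rfl⟩, rfl⟩ := hm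
        have h0 : T (s q) = 0 := by
          simpa [T, LieSubmodule.Quotient.mk_eq_zero] using hmB
        rw [hTs] at h0
        simp [h0]
      · rw [codisjoint_iff, eq_top_iff]
        intro z _
        rw [LieSubmodule.mem_sup]
        refine ⟨z - (s (LieSubmodule.Quotient.mk' B z) : Z), ?_,
          (s (LieSubmodule.Quotient.mk' B z) : Z), ⟨_, ⟨_, rfl⟩, rfl⟩, by abel⟩
        rw [← LieSubmodule.Quotient.mk_eq_zero, map_sub]
        have h5 : LieSubmodule.Quotient.mk' B (s (LieSubmodule.Quotient.mk' B z) : Z)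
            = LieSubmodule.Quotient.mk' B z := hTs (LieSubmodule.Quotient.mk' B z)
        rw [h5, sub_self]
  -- (iii) and IsCompl → moreover
  have h3s : ∀ H : LieSubmodule ℝ 𝔤 Z, IsCompl B H →
      (∀ (Y : 𝔤) (h : H), ⁅Y, (h : Z)⁆ = 0) ∧
      Function.Bijective (fun h : H => LieSubmodule.Quotient.mk' B (h : Z)) := by
    intro H hc
    have hinf : B ⊓ H = ⊥ := disjoint_iff.mp hc.disjoint
    have htrivH : ∀ (Y : 𝔤) (h : H), ⁅Y, (h : Z)⁆ = 0 := by
      intro Y h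
      have : ⁅Y, (h : Z)⁆ ∈ B ⊓ H :=
        (LieSubmodule.mem_inf _ _ _).mpr ⟨htriv Y h, H.lie_mem h.2⟩
      rw [hinf] at this
      exact (LieSubmodule.mem_bot _).mp this
    refine ⟨htrivH, ?_, ?_⟩
    · intro h1 h2 hh
      have : ((h1 : Z) - h2) ∈ B ⊓ H := by
        refine (LieSubmodule.mem_inf _ _ _).mpr ⟨?_, H.sub_mem h1.2 h2.2⟩
        rw [← LieSubmodule.Quotient.mk_eq_zero, map_sub]
        simpa [sub_eq_zero] using hh
      rw [hinf] at this
      have h6 := (LieSubmodule.mem_bot _).mp this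
      exact Subtype.ext (sub_eq_zero.mp h6)
    · intro q
      obtain ⟨z, rfl⟩ := LieSubmodule.Quotient.surjective_mk' B q
      have hz : z ∈ B ⊔ H := by rw [codisjoint_iff.mp hc.codisjoint]; trivial
      obtain ⟨b, hb, h, hh, rfl⟩ := (LieSubmodule.mem_sup B H z).mp hz
      refine ⟨⟨h, hh⟩, ?_⟩
      rw [map_add, (LieSubmodule.Quotient.mk_eq_zero B).mpr hb, zero_add]
  -- (iii) → (ii)
  have h32 : (∃ H : LieSubmodule ℝ 𝔤 Z, IsCompl B H) → P2 := by
    rintro ⟨H, hc⟩ y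
    obtain ⟨ht, _, hsurj⟩ := h3s H hc
    obtain ⟨h, hh⟩ := hsurj y
    exact ⟨(h : Z), (LieModule.mem_maxTrivSubmodule ℝ 𝔤 Z _).mpr (fun Y => ht Y h), hh⟩
  exact ⟨⟨h12, h21⟩, ⟨fun h1 => h23 (h12 h1), fun h3 => h21 (h32 h3)⟩,
    fun _ H hc => h3s H hc⟩
end

section
/- Let 𝔤 be a real Lie algebra and (C^•, d) a 𝔤-split cochain complex of 𝔤-modules such that 𝔤 acts trivially on cohomology. Then the inclusion of the subcomplex of invariants (C^•)^𝔤 ⊆ C^• is a quasi-isomorphism: for every i ∈ ℤ, the inclusion induces an isomorphism (ker d_i ∩ (C^i)^𝔤) / d_{i−1}((C^{i−1})^𝔤) → H^i(C). -/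
/-- If `N|M` and all brackets `⁅Y, x⁆` lie in `N`, then `x` is congruent mod `N` to an
invariant element. Proved by applying the splitting to `V = ℝ` with trivial action. -/
lemma LieSplit.exists_invariant {𝔤 : Type*} [LieRing 𝔤] [LieAlgebra ℝ 𝔤]
    {M : Type*} [AddCommGroup M] [Module ℝ M] [LieRingModule 𝔤 M] [LieModule ℝ 𝔤 M]
    {N : LieSubmodule ℝ 𝔤 M} (h : LieSplit 𝔤 N)
    (x : M) (hx : ∀ Y : 𝔤, ⁅Y, x⁆ ∈ N) :
    ∃ y : M, (∀ Y : 𝔤, ⁅Y, y⁆ = 0) ∧ x - y ∈ N := by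
  letI : LieRingModule 𝔤 ℝ :=
    { bracket := fun _ _ => 0
      add_lie := by intros; simp
      lie_add := by intros; simp
      leibniz_lie := by intros; simp }
  haveI : LieModule ℝ 𝔤 ℝ :=
    { smul_lie := by intros; show (0 : ℝ) = _ • (0:ℝ); simp
      lie_smul := by intros; show (0 : ℝ) = _ • (0:ℝ); simp }
  have key : ∀ (Y : 𝔤) (r : ℝ), ⁅Y, r⁆ = (0 : ℝ) := fun _ _ => rfl
  let f : ℝ →ₗ⁅ℝ,𝔤⁆ M ⧸ N :=
    { toLinearMap := LinearMap.toSpanSingleton ℝ (M ⧸ N) (LieSubmodule.Quotient.mk' N x)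
      map_lie' := by
        intro Y r
        have h1 : ⁅Y, LieSubmodule.Quotient.mk' N x⁆ = 0 := by
          rw [← (LieSubmodule.Quotient.mk' N).map_lie,
            LieSubmodule.Quotient.mk_eq_zero]
          exact hx Y
        show (⁅Y, r⁆ : ℝ) • (LieSubmodule.Quotient.mk' N x)
            = ⁅Y, r • (LieSubmodule.Quotient.mk' N x)⁆
        rw [key, zero_smul, lie_smul, h1, smul_zero] }
  obtain ⟨g, hg⟩ := h ℝ f
  refine ⟨g 1, fun Y => ?_, ?_⟩
  · have := g.map_lie (x := Y) (m := (1 : ℝ))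
    rw [key] at this
    rw [← this, map_zero g]
  · have h1 : LieSubmodule.Quotient.mk' N (g 1) = f 1 := by
      have := congrArg (fun k => k 1) hg
      simpa using this
    have h2 : f 1 = LieSubmodule.Quotient.mk' N x := by
      show LinearMap.toSpanSingleton ℝ (M ⧸ N) _ 1 = _
      simp
    rw [h2] at h1
    have : LieSubmodule.Quotient.mk' N (x - g 1) = 0 := by
      rw [map_sub (LieSubmodule.Quotient.mk' N), h1, sub_self]
    exact (LieSubmodule.Quotient.mk_eq_zero N).mp this

/-- **The inclusion of the invariant subcomplex of a `𝔤`-split complex is a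
quasi-isomorphism.**  Let `(C, d)` be a `𝔤`-split cochain complex of `𝔤`-modules on which
`𝔤` acts trivially on cohomology.  Then in every degree the map induced by the inclusion
`(C^•)^𝔤 ⊆ C^•` on cohomology is injective and surjective. -/
theorem stmt8 (𝔤 : Type*) [LieRing 𝔤] [LieAlgebra ℝ 𝔤]
    (C : ℤ → Type*) [∀ i, AddCommGroup (C i)] [∀ i, Module ℝ (C i)]
    [∀ i, LieRingModule 𝔤 (C i)] [∀ i, LieModule ℝ 𝔤 (C i)]
    (d : ∀ i, C i →ₗ⁅ℝ,𝔤⁆ C (i + 1))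
    (hd : ∀ i, (d (i + 1)).comp (d i) = 0)
    (hsplitZ : ∀ i : ℤ, LieSplit 𝔤 (LieModuleHom.ker (d i)))
    (hsplitB : ∀ i : ℤ, LieSplit 𝔤
      ((LieModuleHom.range (d i)).comap (LieModuleHom.ker (d (i + 1))).incl))
    (htriv : ∀ (i : ℤ) (z : C (i + 1)), d (i + 1) z = 0 →
      ∀ Y : 𝔤, ∃ w : C i, ⁅Y, z⁆ = d i w) :
    ∀ i : ℤ,
      (∀ z : C (i + 1), (∀ Y : 𝔤, ⁅Y, z⁆ = 0) → d (i + 1) z = 0 →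
        (∃ w : C i, z = d i w) →
        ∃ w : C i, (∀ Y : 𝔤, ⁅Y, w⁆ = 0) ∧ z = d i w) ∧
      (∀ z : C (i + 1), d (i + 1) z = 0 →
        ∃ z' : C (i + 1), (∀ Y : 𝔤, ⁅Y, z'⁆ = 0) ∧ d (i + 1) z' = 0 ∧
          ∃ w : C i, z - z' = d i w) := by
  intro i
  constructor
  · -- injectivity
    rintro z hzinv _ ⟨w, rfl⟩
    have hw : ∀ Y : 𝔤, ⁅Y, w⁆ ∈ LieModuleHom.ker (d i) := by
      intro Y
      rw [LieModuleHom.mem_ker, (d i).map_lie, hzinv Y]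
    obtain ⟨w', hw'inv, hww'⟩ := (hsplitZ i).exists_invariant w hw
    rw [LieModuleHom.mem_ker, map_sub (d i), sub_eq_zero] at hww'
    exact ⟨w', hw'inv, hww'⟩
  · -- surjectivity
    intro z hz
    set Z := LieModuleHom.ker (d (i + 1)) with hZ
    set x : Z := ⟨z, LieModuleHom.mem_ker.mpr hz⟩ with hx
    have hbr : ∀ Y : 𝔤, ⁅Y, x⁆ ∈
        (LieModuleHom.range (d i)).comap Z.incl := by
      intro Y
      rw [LieSubmodule.mem_comap]
      obtain ⟨w, hw⟩ := htriv i z hz Y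
      exact (LieModuleHom.mem_range _ _).mpr ⟨w, by
        show d i w = ((⁅Y, x⁆ : Z) : C (i + 1))
        rw [← hw]; rfl⟩
    obtain ⟨y, hyinv, hxy⟩ := (hsplitB i).exists_invariant x hbr
    refine ⟨(y : C (i + 1)), ?_, y.2, ?_⟩
    · intro Y
      have : ((⁅Y, y⁆ : Z) : C (i + 1)) = ((0 : Z) : C (i + 1)) := congrArg _ (hyinv Y)
      simpa using this
    · rw [LieSubmodule.mem_comap] at hxy
      obtain ⟨w, hw⟩ := (LieModuleHom.mem_range _ _).mp hxy
      exact ⟨w, by simpa using hw.symm⟩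
end

section
/- Let 𝔤 be a real Lie algebra, (C^•, d) a 𝔤-split cochain complex of 𝔤-modules on which 𝔤 acts trivially on cohomology, and W a finite-dimensional irreducible 𝔤-module on which 𝔤 acts nontrivially. Then the cochain complex Hom_𝔤(W, C^•), with differential given by postcomposition with d, is acyclic: every 𝔤-module morphism λ : W → C^i with d_i ∘ λ = 0 is of the form λ = d_{i−1} ∘ μ for some 𝔤-module morphism μ : W → C^{i−1}. -/
/-- **Acyclicity of `Hom_𝔤(W, C)` for `W` irreducible nontrivial.**  Let `(C, d)` be a
`𝔤`-split cochain complex of `𝔤`-modules on which `𝔤` acts trivially on cohomology, and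
let `W` be a finite-dimensional irreducible `𝔤`-module with nontrivial `𝔤`-action.  Then
every `𝔤`-module morphism `λ : W → C^{i+1}` with `d ∘ λ = 0` is of the form `λ = d ∘ μ`
for some `𝔤`-module morphism `μ : W → C^i`. -/
theorem stmt9 (𝔤 : Type*) [LieRing 𝔤] [LieAlgebra ℝ 𝔤]
    (C : ℤ → Type*) [∀ i, AddCommGroup (C i)] [∀ i, Module ℝ (C i)]
    [∀ i, LieRingModule 𝔤 (C i)] [∀ i, LieModule ℝ 𝔤 (C i)]
    (d : ∀ i, C i →ₗ⁅ℝ,𝔤⁆ C (i + 1))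
    (hd : ∀ i, (d (i + 1)).comp (d i) = 0)
    (hsplitZ : ∀ i : ℤ, LieSplit 𝔤 (LieModuleHom.ker (d i)))
    (hsplitB : ∀ i : ℤ, LieSplit 𝔤
      ((LieModuleHom.range (d i)).comap (LieModuleHom.ker (d (i + 1))).incl))
    (htriv : ∀ (i : ℤ) (z : C (i + 1)), d (i + 1) z = 0 →
      ∀ Y : 𝔤, ∃ w : C i, ⁅Y, z⁆ = d i w)
    (W : Type) [AddCommGroup W] [Module ℝ W] [LieRingModule 𝔤 W] [LieModule ℝ 𝔤 W]
    [FiniteDimensional ℝ W]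
    (hirr : LieModule.IsIrreducible ℝ 𝔤 W)
    (hnontriv : ¬ LieModule.IsTrivial 𝔤 W) :
    ∀ (i : ℤ) (lam : W →ₗ⁅ℝ,𝔤⁆ C (i + 1)), (d (i + 1)).comp lam = 0 →
      ∃ mu : W →ₗ⁅ℝ,𝔤⁆ C i, lam = (d i).comp mu := by
  intro i lam hlam
  have hlam' : ∀ w : W, d (i + 1) (lam w) = 0 := by
    intro w
    have := DFunLike.congr_fun hlam w
    simpa using this
  -- Step 1: lam lands in the range of d i
  set Z := LieModuleHom.ker (d (i + 1)) with hZ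
  set B := (LieModuleHom.range (d i)).comap Z.incl with hB
  have hmemZ : ∀ w : W, lam w ∈ Z := fun w => LieModuleHom.mem_ker.mpr (hlam' w)
  set lamZ : W →ₗ⁅ℝ,𝔤⁆ Z := LieModuleHom.codRestrict Z lam hmemZ with hlamZ
  set f : W →ₗ⁅ℝ,𝔤⁆ (Z ⧸ B) := (LieSubmodule.Quotient.mk' B).comp lamZ with hf
  have hbr : ∀ (Y : 𝔤) (w : W), f ⁅Y, w⁆ = 0 := by
    intro Y w
    have h1 : f ⁅Y, w⁆ = LieSubmodule.Quotient.mk' B ⁅Y, lamZ w⁆ := by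
      simp [hf, LieModuleHom.map_lie]
    rw [h1, LieSubmodule.Quotient.mk_eq_zero]
    rw [hB, LieSubmodule.mem_comap]
    obtain ⟨c, hc⟩ := htriv i (lam w) (hlam' w) Y
    refine (LieModuleHom.mem_range _ _).mpr ⟨c, ?_⟩
    have : (↑(⁅Y, lamZ w⁆ : Z) : C (i + 1)) = ⁅Y, lam w⁆ := by
      rw [LieSubmodule.coe_bracket]
      simp [hlamZ]
    simp only [LieSubmodule.incl_apply, this, hc]
  have hf0 : f = 0 := by
    by_contra hne
    have hker : f.ker ≠ ⊤ := by
      intro h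
      apply hne
      ext w
      have : w ∈ f.ker := h ▸ trivial
      simpa using LieModuleHom.mem_ker.mp this
    have hbot : f.ker = ⊥ := (hirr.eq_bot_or_eq_top f.ker).resolve_right hker
    apply hnontriv
    constructor
    intro Y w
    have : ⁅Y, w⁆ ∈ f.ker := LieModuleHom.mem_ker.mpr (hbr Y w)
    rw [hbot] at this
    simpa using this
  have hmem : ∀ w : W, lam w ∈ LieModuleHom.range (d i) := by
    intro w
    have h0 : f w = 0 := by rw [hf0]; rfl
    have : lamZ w ∈ B := (LieSubmodule.Quotient.mk_eq_zero B).mp h0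
    rw [hB, LieSubmodule.mem_comap] at this
    simpa [hlamZ] using this
  -- Step 2: build lam' : W → C i ⧸ ker (d i)
  set K := LieModuleHom.ker (d i) with hKdef
  have hKle : K.toSubmodule ≤ LinearMap.ker (d i).toLinearMap := by
    intro x hx
    exact LieModuleHom.mem_ker.mp hx
  set dbarl : (C i ⧸ K) →ₗ[ℝ] C (i + 1) :=
    Submodule.liftQ K.toSubmodule (d i).toLinearMap hKle with hdbarl
  have hdbar_mk : ∀ x : C i, dbarl (LieSubmodule.Quotient.mk' K x) = d i x := fun x => rfl
  have hinj : Function.Injective dbarl := by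
    rw [← LinearMap.ker_eq_bot]
    exact Submodule.ker_liftQ_eq_bot _ _ _ (le_of_eq rfl)
  set dbar : (C i ⧸ K) →ₗ⁅ℝ,𝔤⁆ C (i + 1) :=
    { dbarl with
      map_lie' := by
        intro Y q
        obtain ⟨x, rfl⟩ := LieSubmodule.Quotient.surjective_mk' K q
        have h1 : ⁅Y, LieSubmodule.Quotient.mk' K x⁆ = LieSubmodule.Quotient.mk' K ⁅Y, x⁆ :=
          (LieModuleHom.map_lie _ _ _).symm
        simp only [h1, LinearMap.toFun_eq_coe, hdbar_mk]
        exact (LieModuleHom.map_lie (d i) Y x) } with hdbar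
  have hdbar_apply : ∀ q, dbar q = dbarl q := fun q => rfl
  have hmem' : ∀ w : W, lam w ∈ LinearMap.range dbarl := by
    intro w
    obtain ⟨x, hx⟩ := (LieModuleHom.mem_range _ _).mp (hmem w)
    exact ⟨LieSubmodule.Quotient.mk' K x, by rw [hdbar_mk]; exact hx⟩
  set e : (C i ⧸ K) ≃ₗ[ℝ] LinearMap.range dbarl := LinearEquiv.ofInjective dbarl hinj with he
  set laml : W →ₗ[ℝ] (C i ⧸ K) :=
    e.symm.toLinearMap ∘ₗ (lam.toLinearMap.codRestrict (LinearMap.range dbarl) hmem') with hlaml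
  have hkey : ∀ w : W, dbarl (laml w) = lam w := by
    intro w
    have h1 : e (laml w) = ⟨lam w, hmem' w⟩ := by
      simp [hlaml, LinearEquiv.apply_symm_apply]
      rfl
    have h2 : (e (laml w) : C (i + 1)) = dbarl (laml w) := rfl
    rw [h1] at h2
    exact h2.symm
  have hinj2 : Function.Injective dbar := hinj
  have hkeyd : ∀ w : W, dbar (laml w) = lam w := hkey
  set lam' : W →ₗ⁅ℝ,𝔤⁆ (C i ⧸ K) :=
    { laml with
      map_lie' := by
        intro Y w
        apply hinj2
        simp only [LinearMap.toFun_eq_coe]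
        show dbar (laml ⁅Y, w⁆) = dbar ⁅Y, laml w⁆
        rw [hkeyd, LieModuleHom.map_lie dbar Y (laml w), hkeyd]
        exact LieModuleHom.map_lie lam Y w } with hlam'def
  obtain ⟨mu, hmu⟩ := hsplitZ i W lam'
  refine ⟨mu, ?_⟩
  ext w
  have h1 : LieSubmodule.Quotient.mk' K (mu w) = lam' w := DFunLike.congr_fun hmu w
  have h2 : lam' w = laml w := rfl
  calc lam w = dbarl (laml w) := (hkey w).symm
    _ = dbarl (LieSubmodule.Quotient.mk' K (mu w)) := by rw [h1, h2]
    _ = d i (mu w) := hdbar_mk (mu w)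
    _ = (d i).comp mu w := rfl
end

section
/- Let 𝔤 be a real Lie algebra, (C^•, d) a 𝔤-split cochain complex of 𝔤-modules on which 𝔤 acts trivially on cohomology, and V a finite-dimensional 𝔤-module which is a direct sum of irreducible 𝔤-submodules (equivalently, whose lattice of Lie submodules is complemented). Then the restriction map Hom_𝔤(V, C^•) → Hom_ℝ(V^𝔤, (C^•)^𝔤), λ ↦ λ|_{V^𝔤}, is a morphism of cochain complexes (both complexes carrying the differential given by postcomposition with d) and is a quasi-isomorphism. -/
open LieModule

section Auxiliary

variable {𝔤 : Type*} [LieRing 𝔤] [LieAlgebra ℝ 𝔤]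

/-- `LieSplit` gives lifting against the quotient map for finite-dimensional modules in
an arbitrary universe (transport from `Type 0` along a basis). -/
theorem LieSplit.surj {M : Type*} [AddCommGroup M] [Module ℝ M] [LieRingModule 𝔤 M]
    [LieModule ℝ 𝔤 M] {N : LieSubmodule ℝ 𝔤 M} (hN : LieSplit 𝔤 N)
    (V : Type*) [AddCommGroup V] [Module ℝ V] [LieRingModule 𝔤 V] [LieModule ℝ 𝔤 V]
    [FiniteDimensional ℝ V] (h : V →ₗ⁅ℝ,𝔤⁆ M ⧸ N) :
    ∃ f : V →ₗ⁅ℝ,𝔤⁆ M, (LieSubmodule.Quotient.mk' N).comp f = h := by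
  classical
  set n := Module.finrank ℝ V with hn
  let b : Module.Basis (Fin n) ℝ V := Module.finBasis ℝ V
  let e : (Fin n → ℝ) ≃ₗ[ℝ] V := b.equivFun.symm
  letI : LieRingModule 𝔤 (Fin n → ℝ) :=
    { bracket := fun y x => e.symm ⁅y, e x⁆
      add_lie := fun x y m => by
        show e.symm ⁅x + y, e m⁆ = e.symm ⁅x, e m⁆ + e.symm ⁅y, e m⁆
        rw [add_lie, map_add]
      lie_add := fun x m n => by
        show e.symm ⁅x, e (m + n)⁆ = e.symm ⁅x, e m⁆ + e.symm ⁅x, e n⁆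
        rw [map_add, lie_add, map_add]
      leibniz_lie := fun x y m => by
        show e.symm ⁅x, e (e.symm ⁅y, e m⁆)⁆ =
          e.symm ⁅⁅x, y⁆, e m⁆ + e.symm ⁅y, e (e.symm ⁅x, e m⁆)⁆
        rw [e.apply_symm_apply, e.apply_symm_apply, ← map_add, leibniz_lie] }
  letI : LieModule ℝ 𝔤 (Fin n → ℝ) :=
    { smul_lie := fun t x m => by
        show e.symm ⁅t • x, e m⁆ = t • e.symm ⁅x, e m⁆
        rw [smul_lie, map_smul]
      lie_smul := fun t x m => by
        show e.symm ⁅x, e (t • m)⁆ = t • e.symm ⁅x, e m⁆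
        rw [map_smul, lie_smul, map_smul] }
  let E₁ : (Fin n → ℝ) →ₗ⁅ℝ,𝔤⁆ V :=
    { toLinearMap := e.toLinearMap
      map_lie' := fun {x m} => e.apply_symm_apply _ }
  let E₂ : V →ₗ⁅ℝ,𝔤⁆ (Fin n → ℝ) :=
    { toLinearMap := e.symm.toLinearMap
      map_lie' := fun {x m} => by
        show e.symm ⁅x, m⁆ = e.symm ⁅x, e (e.symm m)⁆
        rw [e.apply_symm_apply] }
  obtain ⟨f₀, hf₀⟩ := hN (Fin n → ℝ) (h.comp E₁)
  refine ⟨f₀.comp E₂, ?_⟩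
  ext v
  have h1 := LieModuleHom.congr_fun hf₀ (e.symm v)
  simp only [LieModuleHom.comp_apply] at h1 ⊢
  show (LieSubmodule.Quotient.mk' N) (f₀ (e.symm v)) = h v
  rw [h1]
  show h (e (e.symm v)) = h v
  rw [e.apply_symm_apply]

/-- In a `𝔤`-module with complemented lattice of Lie submodules, any Lie submodule
containing all invariants and all brackets is the whole module. -/
theorem aux_sup_top {V : Type*} [AddCommGroup V] [Module ℝ V] [LieRingModule 𝔤 V]
    [LieModule ℝ 𝔤 V] (hV : ComplementedLattice (LieSubmodule ℝ 𝔤 V))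
    (S : LieSubmodule ℝ 𝔤 V) (hU : maxTrivSubmodule ℝ 𝔤 V ≤ S)
    (hbr : ∀ (Y : 𝔤) (v : V), ⁅Y, v⁆ ∈ S) : S = ⊤ := by
  obtain ⟨T, hT⟩ := exists_isCompl S
  have hTtriv : T ≤ maxTrivSubmodule ℝ 𝔤 V := by
    intro t ht
    rw [mem_maxTrivSubmodule]
    intro Y
    have h1 : ⁅Y, t⁆ ∈ S ⊓ T := ⟨hbr Y t, T.lie_mem ht⟩
    rw [hT.inf_eq_bot] at h1
    exact (LieSubmodule.mem_bot _).mp h1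
  have hTS : T ≤ S := le_trans hTtriv hU
  have hTbot : T = ⊥ := le_bot_iff.mp (hT.disjoint hTS le_rfl)
  have := hT.sup_eq_top
  rw [hTbot, sup_bot_eq] at this
  exact this

end Auxiliary

/-- **The restriction map `Hom_𝔤(V, C^•) → Hom_ℝ(V^𝔤, (C^•)^𝔤)` is a quasi-isomorphism.**
Let `(C, d)` be a `𝔤`-split cochain complex of `𝔤`-modules on which `𝔤` acts trivially on
cohomology, and let `V` be a finite-dimensional `𝔤`-module which is a direct sum of
irreducibles (its lattice of Lie submodules is complemented).  The map `λ ↦ λ|_{V^𝔤}`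
(given by `LieModule.maxTrivHom`) commutes with the differentials (postcomposition with
`d`, resp. with its restriction to invariants), and induces in every degree an injective
and surjective map on cohomology. -/
theorem stmt10 (𝔤 : Type*) [LieRing 𝔤] [LieAlgebra ℝ 𝔤]
    (C : ℤ → Type*) [∀ i, AddCommGroup (C i)] [∀ i, Module ℝ (C i)]
    [∀ i, LieRingModule 𝔤 (C i)] [∀ i, LieModule ℝ 𝔤 (C i)]
    (d : ∀ i, C i →ₗ⁅ℝ,𝔤⁆ C (i + 1))
    (hd : ∀ i, (d (i + 1)).comp (d i) = 0)
    (hsplitZ : ∀ i : ℤ, LieSplit 𝔤 (LieModuleHom.ker (d i)))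
    (hsplitB : ∀ i : ℤ, LieSplit 𝔤
      ((LieModuleHom.range (d i)).comap (LieModuleHom.ker (d (i + 1))).incl))
    (htriv : ∀ (i : ℤ) (z : C (i + 1)), d (i + 1) z = 0 →
      ∀ Y : 𝔤, ∃ w : C i, ⁅Y, z⁆ = d i w)
    (V : Type*) [AddCommGroup V] [Module ℝ V] [LieRingModule 𝔤 V] [LieModule ℝ 𝔤 V]
    [FiniteDimensional ℝ V]
    (hV : ComplementedLattice (LieSubmodule ℝ 𝔤 V)) :
    (∀ (i : ℤ) (lam : V →ₗ⁅ℝ,𝔤⁆ C i),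
      (maxTrivHom ((d i).comp lam)).toLinearMap =
        (maxTrivHom (d i)).toLinearMap ∘ₗ (maxTrivHom lam).toLinearMap) ∧
    (∀ i : ℤ,
      (∀ lam : V →ₗ⁅ℝ,𝔤⁆ C (i + 1), (d (i + 1)).comp lam = 0 →
        (∃ g : (maxTrivSubmodule ℝ 𝔤 V) →ₗ[ℝ] (maxTrivSubmodule ℝ 𝔤 (C i)),
          (maxTrivHom lam).toLinearMap = (maxTrivHom (d i)).toLinearMap ∘ₗ g) →
        ∃ mu : V →ₗ⁅ℝ,𝔤⁆ C i, lam = (d i).comp mu) ∧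
      (∀ g : (maxTrivSubmodule ℝ 𝔤 V) →ₗ[ℝ] (maxTrivSubmodule ℝ 𝔤 (C (i + 1))),
        (maxTrivHom (d (i + 1))).toLinearMap ∘ₗ g = 0 →
        ∃ lam : V →ₗ⁅ℝ,𝔤⁆ C (i + 1), (d (i + 1)).comp lam = 0 ∧
          ∃ g' : (maxTrivSubmodule ℝ 𝔤 V) →ₗ[ℝ] (maxTrivSubmodule ℝ 𝔤 (C i)),
            (maxTrivHom lam).toLinearMap - g = (maxTrivHom (d i)).toLinearMap ∘ₗ g')) := by
  classical
  refine ⟨fun i lam => by ext x; rfl, fun i => ⟨?_, ?_⟩⟩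
  · -- injectivity on cohomology
    rintro lam hlam ⟨g, hg⟩
    -- Step 1: every value of `lam` is a coboundary
    have hmem : ∀ v : V, lam v ∈ LieModuleHom.range (d i) := by
      have hS : (LieModuleHom.range (d i)).comap lam = ⊤ := by
        refine aux_sup_top hV _ ?_ ?_
        · intro u hu
          rw [LieSubmodule.mem_comap]
          have h1 := LinearMap.congr_fun hg ⟨u, hu⟩
          exact ⟨(g ⟨u, hu⟩ : C i), (congrArg Subtype.val h1).symm⟩
        · intro Y v
          rw [LieSubmodule.mem_comap]
          have hz : d (i + 1) (lam v) = 0 := by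
            have := LieModuleHom.congr_fun hlam v
            simpa using this
          obtain ⟨w, hw⟩ := htriv i (lam v) hz Y
          refine ⟨w, ?_⟩
          rw [LieModuleHom.map_lie, hw]
      intro v
      have hv : v ∈ (LieModuleHom.range (d i)).comap lam := by rw [hS]; trivial
      exact (LieSubmodule.mem_comap).mp hv
    -- Step 2: factor `lam` through the quotient by the kernel of `d i`
    set N : LieSubmodule ℝ 𝔤 (C i) := LieModuleHom.ker (d i) with hN
    have hNle : N.toSubmodule ≤ LinearMap.ker (d i).toLinearMap :=
      le_of_eq (LieModuleHom.ker_toSubmodule (d i))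
    let eBar : (C i ⧸ N) →ₗ[ℝ] C (i + 1) :=
      Submodule.liftQ N.toSubmodule (d i).toLinearMap hNle
    have heBar_mk : ∀ c : C i, eBar (LieSubmodule.Quotient.mk' N c) = d i c := fun c => rfl
    have heBar_inj : Function.Injective eBar := by
      rw [← LinearMap.ker_eq_bot]
      exact Submodule.ker_liftQ_eq_bot _ _ _
        (le_of_eq (LieModuleHom.ker_toSubmodule (d i)).symm)
    have hrange : ∀ v : V, lam v ∈ LinearMap.range eBar := by
      intro v
      obtain ⟨c, hc⟩ := hmem v
      exact ⟨LieSubmodule.Quotient.mk' N c, by rw [heBar_mk, hc]⟩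
    let eEquiv := LinearEquiv.ofInjective eBar heBar_inj
    let h₀ : V →ₗ[ℝ] (C i ⧸ N) :=
      eEquiv.symm.toLinearMap ∘ₗ (lam.toLinearMap.codRestrict (LinearMap.range eBar) hrange)
    have h1 : ∀ x : LinearMap.range eBar, eBar (eEquiv.symm x) = (x : C (i + 1)) := by
      intro x
      conv_rhs => rw [← eEquiv.apply_symm_apply x]
      exact (LinearEquiv.ofInjective_apply eBar (eEquiv.symm x)).symm
    have hh₀ : ∀ v : V, eBar (h₀ v) = lam v := fun v => h1 ⟨lam v, hrange v⟩
    have heBar_lie : ∀ (Y : 𝔤) (q : C i ⧸ N), eBar ⁅Y, q⁆ = ⁅Y, eBar q⁆ := by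
      intro Y q
      obtain ⟨c, rfl⟩ := LieSubmodule.Quotient.surjective_mk' (N := N) q
      rw [← LieModuleHom.map_lie, heBar_mk, heBar_mk, LieModuleHom.map_lie]
    let h : V →ₗ⁅ℝ,𝔤⁆ C i ⧸ N :=
      { toLinearMap := h₀
        map_lie' := by
          intro Y v
          apply heBar_inj
          show eBar (h₀ ⁅Y, v⁆) = eBar ⁅Y, h₀ v⁆
          rw [hh₀, heBar_lie, hh₀, LieModuleHom.map_lie] }
    obtain ⟨mu, hmu⟩ := (hsplitZ i).surj V h
    refine ⟨mu, ?_⟩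
    ext v
    have h2 := LieModuleHom.congr_fun hmu v
    calc lam v = eBar (h₀ v) := (hh₀ v).symm
      _ = eBar (LieSubmodule.Quotient.mk' N (mu v)) := by
          rw [show (LieSubmodule.Quotient.mk' N) (mu v) = h₀ v from h2]
      _ = d i (mu v) := heBar_mk _
  · -- surjectivity on cohomology
    intro g hg
    obtain ⟨W, hW⟩ := exists_isCompl (maxTrivSubmodule ℝ 𝔤 V)
    have hcompl : IsCompl (maxTrivSubmodule ℝ 𝔤 V : Submodule ℝ V) (W : Submodule ℝ V) := by
      constructor
      · rw [disjoint_iff, ← LieSubmodule.inf_toSubmodule, hW.inf_eq_bot]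
        rfl
      · rw [codisjoint_iff, ← LieSubmodule.sup_toSubmodule, hW.sup_eq_top]
        rfl
    let p : V →ₗ[ℝ] (maxTrivSubmodule ℝ 𝔤 V : Submodule ℝ V) :=
      Submodule.projectionOnto _ _ hcompl
    have hWmem : ∀ (Y : 𝔤) (v : V), ⁅Y, v⁆ ∈ (W : Submodule ℝ V) := by
      intro Y v
      obtain ⟨u, hu, w, hw, rfl⟩ := Submodule.mem_sup.mp
        (hcompl.sup_eq_top ▸ Submodule.mem_top :
          v ∈ (maxTrivSubmodule ℝ 𝔤 V : Submodule ℝ V) ⊔ (W : Submodule ℝ V))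
      have hu0 : ⁅Y, u⁆ = 0 := hu Y
      rw [lie_add, hu0, zero_add]
      exact W.lie_mem hw
    let lam : V →ₗ⁅ℝ,𝔤⁆ C (i + 1) :=
      { toLinearMap := (maxTrivSubmodule ℝ 𝔤 (C (i + 1))).toSubmodule.subtype ∘ₗ g ∘ₗ p
        map_lie' := by
          intro Y v
          show ((g (p ⁅Y, v⁆) : maxTrivSubmodule ℝ 𝔤 (C (i + 1))) : C (i + 1)) =
            ⁅Y, (g (p v) : C (i + 1))⁆
          rw [Submodule.projectionOnto_apply_of_mem_right hcompl (hWmem Y v)]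
          rw [(g (p v)).2 Y, map_zero]
          rfl }
    have hlamval : ∀ v : V,
        lam v = ((g (p v) : maxTrivSubmodule ℝ 𝔤 (C (i + 1))) : C (i + 1)) := fun v => rfl
    refine ⟨lam, ?_, 0, ?_⟩
    · ext v
      have h1 := LinearMap.congr_fun hg (p v)
      simp only [LinearMap.comp_apply, LinearMap.zero_apply] at h1
      have h2 : ((maxTrivHom (d (i + 1))) (g (p v)) : C (i + 1 + 1)) = 0 :=
        congrArg Subtype.val h1
      simp only [LieModuleHom.comp_apply, LieModuleHom.zero_apply, hlamval]
      exact h2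
    · rw [LinearMap.comp_zero, sub_eq_zero]
      ext x
      show ((maxTrivHom lam x : maxTrivSubmodule ℝ 𝔤 (C (i + 1))) : C (i + 1)) = (g x : C (i + 1))
      rw [coe_maxTrivHom_apply, hlamval]
      congr 1
      exact congrArg g (Submodule.projectionOnto_apply_left hcompl x)
end

section
/- Let G be a group and (C^•, d) a cochain complex of real linear representations of G (equivalently, of modules over the group algebra ℝ[G]) which is G-split and such that G acts trivially on each cohomology space H^i(C). Then the inclusion of the subcomplex of G-invariants (C^•)^G ⊆ C^• is a quasi-isomorphism: for every i ∈ ℤ, it induces an isomorphism (ker d_i ∩ (C^i)^G) / d_{i−1}((C^{i−1})^G) → H^i(C). -/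
/-- For a submodule `N` of an `ℝ[G]`-module `M`, the condition `N|M`: for every
`ℝ[G]`-module `V` which is finite-dimensional over `ℝ`, postcomposition with the quotient
map `Hom_G(V, M) → Hom_G(V, M/N)` is surjective. -/
def GSplit (G : Type*) [Group G] {M : Type*} [AddCommGroup M]
    [Module (MonoidAlgebra ℝ G) M] (N : Submodule (MonoidAlgebra ℝ G) M) : Prop :=
  ∀ (V : Type) [AddCommGroup V] [Module ℝ V] [Module (MonoidAlgebra ℝ G) V]
    [IsScalarTower ℝ (MonoidAlgebra ℝ G) V] [FiniteDimensional ℝ V],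
    Function.Surjective
      (fun f : V →ₗ[MonoidAlgebra ℝ G] M => N.mkQ.comp f :
        (V →ₗ[MonoidAlgebra ℝ G] M) → (V →ₗ[MonoidAlgebra ℝ G] M ⧸ N))

noncomputable def aug (G : Type*) [Group G] : MonoidAlgebra ℝ G →ₐ[ℝ] ℝ :=
  MonoidAlgebra.lift ℝ ℝ G 1

theorem smul_eq_of_invariant {G : Type*} [Group G] {M : Type*} [AddCommGroup M]
    [Module (MonoidAlgebra ℝ G) M] (q : M) (hq : ∀ g : G, MonoidAlgebra.of ℝ G g • q = q)
    (a : MonoidAlgebra ℝ G) :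
    a • q = algebraMap ℝ (MonoidAlgebra ℝ G) (aug G a) • q := by
  induction a using MonoidAlgebra.induction_on with
  | of g =>
      have h1 : aug G (MonoidAlgebra.of ℝ G g) = 1 := by simp [aug]
      rw [hq g, h1, map_one, one_smul]
  | add f g hf hg => simp [add_smul, map_add, hf, hg]
  | smul r f hf =>
      rw [map_smul, smul_eq_mul]
      conv_lhs => rw [Algebra.smul_def, mul_smul, hf, ← mul_smul, ← map_mul]

theorem GSplit.lift_invariant {G : Type*} [Group G] {M : Type*} [AddCommGroup M]
    [Module (MonoidAlgebra ℝ G) M] {N : Submodule (MonoidAlgebra ℝ G) M}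
    (h : GSplit G N) (m : M)
    (hm : ∀ g : G, MonoidAlgebra.of ℝ G g • m - m ∈ N) :
    ∃ m' : M, (∀ g : G, MonoidAlgebra.of ℝ G g • m' = m') ∧ m - m' ∈ N := by
  classical
  letI : Module (MonoidAlgebra ℝ G) ℝ := Module.compHom ℝ (aug G).toRingHom
  haveI : IsScalarTower ℝ (MonoidAlgebra ℝ G) ℝ := ⟨fun r a x => by
    show (aug G) (r • a) * x = r • ((aug G) a * x)
    simp [map_smul, smul_eq_mul, mul_assoc]⟩
  set q : M ⧸ N := N.mkQ m with hqdef
  have hqinv : ∀ g : G, MonoidAlgebra.of ℝ G g • q = q := by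
    intro g
    have h0 : N.mkQ (MonoidAlgebra.of ℝ G g • m - m) = 0 := by
      simpa using (Submodule.Quotient.mk_eq_zero N).mpr (hm g)
    rw [map_sub, map_smul, sub_eq_zero] at h0
    exact h0
  let f : ℝ →ₗ[MonoidAlgebra ℝ G] M ⧸ N :=
    { toFun := fun r => algebraMap ℝ (MonoidAlgebra ℝ G) r • q
      map_add' := fun r s => by simp [map_add, add_smul]
      map_smul' := fun a r => by
        show algebraMap ℝ (MonoidAlgebra ℝ G) ((aug G) a * r) • q
          = a • (algebraMap ℝ (MonoidAlgebra ℝ G) r • q)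
        rw [← mul_smul, ← Algebra.commutes r a, mul_smul,
          smul_eq_of_invariant q hqinv a, ← mul_smul, ← map_mul, mul_comm r] }
  obtain ⟨F, hF⟩ := h ℝ f
  refine ⟨F 1, fun g => ?_, ?_⟩
  · have h1 : (MonoidAlgebra.of ℝ G g) • (1 : ℝ) = 1 := by
      show (aug G) (MonoidAlgebra.of ℝ G g) * 1 = 1
      simp [aug]
    rw [← F.map_smul, h1]
  · have hem : N.mkQ (F 1) = N.mkQ m := by
      have h1 : N.mkQ (F 1) = f 1 := congrArg (fun L => L 1) hF
      rw [h1]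
      show algebraMap ℝ (MonoidAlgebra ℝ G) 1 • q = N.mkQ m
      rw [map_one, one_smul, hqdef]
    have := (Submodule.Quotient.eq N).mp hem.symm
    simpa using this

/-- **The inclusion of the invariant subcomplex of a `G`-split complex of representations
is a quasi-isomorphism.**  Let `(C, d)` be a `G`-split cochain complex of real linear
representations of a group `G` (modules over `ℝ[G]`), such that `G` acts trivially on
each cohomology space.  Then in every degree the map induced on cohomology by the
inclusion `(C^•)^G ⊆ C^•` is injective and surjective. -/
theorem stmt11 (G : Type*) [Group G]
    (C : ℤ → Type*) [∀ i, AddCommGroup (C i)] [∀ i, Module (MonoidAlgebra ℝ G) (C i)]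
    (d : ∀ i, C i →ₗ[MonoidAlgebra ℝ G] C (i + 1))
    (hd : ∀ i, d (i + 1) ∘ₗ d i = 0)
    (hsplitZ : ∀ i : ℤ, GSplit G (LinearMap.ker (d i)))
    (hsplitB : ∀ i : ℤ, GSplit G
      ((LinearMap.range (d i)).comap (LinearMap.ker (d (i + 1))).subtype))
    (htriv : ∀ (i : ℤ) (z : C (i + 1)), d (i + 1) z = 0 → ∀ g : G,
      ∃ w : C i, MonoidAlgebra.of ℝ G g • z - z = d i w) :
    ∀ i : ℤ,
      (∀ z : C (i + 1), (∀ g : G, MonoidAlgebra.of ℝ G g • z = z) → d (i + 1) z = 0 →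
        (∃ w : C i, z = d i w) →
        ∃ w : C i, (∀ g : G, MonoidAlgebra.of ℝ G g • w = w) ∧ z = d i w) ∧
      (∀ z : C (i + 1), d (i + 1) z = 0 →
        ∃ z' : C (i + 1), (∀ g : G, MonoidAlgebra.of ℝ G g • z' = z') ∧
          d (i + 1) z' = 0 ∧ ∃ w : C i, z - z' = d i w) := by
  intro i
  constructor
  · rintro z hzinv hzcl ⟨w, hw⟩
    have hm : ∀ g : G, MonoidAlgebra.of ℝ G g • w - w ∈ LinearMap.ker (d i) := by
      intro g
      rw [LinearMap.mem_ker, map_sub, map_smul, ← hw, hzinv g, sub_self]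
    obtain ⟨w', hw'inv, hww'⟩ := (hsplitZ i).lift_invariant w hm
    refine ⟨w', hw'inv, ?_⟩
    rw [LinearMap.mem_ker, map_sub, sub_eq_zero] at hww'
    rw [hw, hww']
  · intro z hz
    set Z := LinearMap.ker (d (i + 1)) with hZ
    set zz : Z := ⟨z, hz⟩ with hzz
    have hm : ∀ g : G, MonoidAlgebra.of ℝ G g • zz - zz ∈
        (LinearMap.range (d i)).comap Z.subtype := by
      intro g
      obtain ⟨w, hw⟩ := htriv i z hz g
      refine Submodule.mem_comap.mpr ?_
      show ((MonoidAlgebra.of ℝ G g • zz - zz : Z) : C (i + 1)) ∈ LinearMap.range (d i)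
      have : ((MonoidAlgebra.of ℝ G g • zz - zz : Z) : C (i + 1))
          = MonoidAlgebra.of ℝ G g • z - z := by simp [hzz]
      rw [this, hw]
      exact ⟨w, rfl⟩
    obtain ⟨z', hz'inv, hdz⟩ := (hsplitB i).lift_invariant zz hm
    refine ⟨(z' : C (i + 1)), fun g => ?_, z'.2, ?_⟩
    · have := congrArg (Subtype.val) (hz'inv g)
      simpa using this
    · have : ((zz - z' : Z) : C (i + 1)) ∈ LinearMap.range (d i) := hdz
      obtain ⟨w, hw⟩ := this
      exact ⟨w, by simpa [hzz] using hw.symm⟩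
end

section
/- Let A be a commutative integral domain equipped with an ℕ-grading A = ⨁_{i∈ℕ} A_i (a graded ring), and let S be the multiplicative submonoid of A consisting of all nonzero homogeneous elements. Let N be an A-module equipped with a compatible ℤ-grading N = ⨁_{j∈ℤ} N_j (i.e. A_i • N_j ⊆ N_{i+j} for all i, j). Then the localized module S^{−1}N (isomorphic to S^{−1}A ⊗_A N) is a flat A-module. -/
set_option linter.unusedSectionVars false
set_option linter.unusedVariables false
set_option maxHeartbeats 1000000
set_option synthInstance.maxHeartbeats 1000000
open scoped TensorProduct

/-- The multiplicative submonoid of nonzero homogeneous elements of a graded domain. -/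
def homogeneousNonzero (A : Type*) [CommRing A] [IsDomain A]
    (𝒜 : ℕ → AddSubgroup A) [GradedRing 𝒜] : Submonoid A where
  carrier := {a | a ≠ 0 ∧ ∃ i, a ∈ 𝒜 i}
  one_mem' := ⟨one_ne_zero, 0, SetLike.one_mem_graded 𝒜⟩
  mul_mem' := fun {a b} ha hb => by
    refine ⟨mul_ne_zero ha.1 hb.1, ?_⟩
    obtain ⟨i, hi⟩ := ha.2
    obtain ⟨j, hj⟩ := hb.2
    exact ⟨i + j, SetLike.mul_mem_graded hi hj⟩

section Aux
variable {A : Type*} [CommRing A] [IsDomain A] {𝒜 : ℕ → AddSubgroup A} [GradedRing 𝒜]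
variable {N : Type*} [AddCommGroup N] [Module A N]
    {𝒩 : ℤ → AddSubgroup N} [DirectSum.Decomposition 𝒩]
    (hcompat : ∀ (i : ℕ) (j : ℤ) (a : A) (n : N),
      a ∈ 𝒜 i → n ∈ 𝒩 j → a • n ∈ 𝒩 ((i : ℤ) + j))

open Classical in
/-- Component of (homogeneous x) * c. -/
lemma comp_hom_mul {x : A} {i : ℕ} (hx : x ∈ 𝒜 i) (c : A) (m : ℕ) :
    ((DirectSum.decompose 𝒜 (x * c) m : 𝒜 m) : A) =
      if _ : i ≤ m then x * ((DirectSum.decompose 𝒜 c (m - i) : 𝒜 (m-i)) : A) else 0 := by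
  conv_lhs => rw [show x * c = ∑ k ∈ (DirectSum.decompose 𝒜 c).support,
      x * ((DirectSum.decompose 𝒜 c k : 𝒜 k) : A) by
    rw [← Finset.mul_sum, DirectSum.sum_support_decompose]]
  rw [DirectSum.decompose_sum, DFinsupp.finset_sum_apply, AddSubmonoidClass.coe_finset_sum]
  have hterm : ∀ k ∈ (DirectSum.decompose 𝒜 c).support,
      ((DirectSum.decompose 𝒜 (x * ((DirectSum.decompose 𝒜 c k : 𝒜 k) : A)) m : 𝒜 m) : A)
        = if i + k = m then x * ((DirectSum.decompose 𝒜 c k : 𝒜 k) : A) else 0 := by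
    intro k _
    have hmem : x * ((DirectSum.decompose 𝒜 c k : 𝒜 k) : A) ∈ 𝒜 (i + k) :=
      SetLike.mul_mem_graded hx (SetLike.coe_mem _)
    by_cases hik : i + k = m
    · rw [if_pos hik]; subst hik; exact DirectSum.decompose_of_mem_same 𝒜 hmem
    · rw [if_neg hik]; exact DirectSum.decompose_of_mem_ne 𝒜 hmem hik
  rw [Finset.sum_congr rfl hterm]
  by_cases h : i ≤ m
  · rw [dif_pos h]
    have : ∀ k, (i + k = m) ↔ (k = m - i) := by intro k; omega
    simp_rw [this]
    rw [Finset.sum_ite_eq' (DirectSum.decompose 𝒜 c).support (m - i)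
      (fun k => x * ((DirectSum.decompose 𝒜 c k : 𝒜 k) : A))]
    by_cases hmem : m - i ∈ (DirectSum.decompose 𝒜 c).support
    · rw [if_pos hmem]
    · rw [if_neg hmem]
      rw [DFinsupp.notMem_support_iff] at hmem
      rw [hmem]
      simp
  · rw [dif_neg h]
    apply Finset.sum_eq_zero
    intro k _
    rw [if_neg (by omega)]

include hcompat in
open Classical in
/-- Component of (homogeneous x) • n. -/
lemma comp_hom_smul {x : A} {i : ℕ} (hx : x ∈ 𝒜 i) (n : N) (m : ℤ) :
    ((DirectSum.decompose 𝒩 (x • n) m : 𝒩 m) : N) =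
      x • ((DirectSum.decompose 𝒩 n (m - i) : 𝒩 (m - i)) : N) := by
  conv_lhs => rw [show x • n = ∑ k ∈ (DirectSum.decompose 𝒩 n).support,
      x • ((DirectSum.decompose 𝒩 n k : 𝒩 k) : N) by
    rw [← Finset.smul_sum, DirectSum.sum_support_decompose]]
  rw [DirectSum.decompose_sum, DFinsupp.finset_sum_apply, AddSubmonoidClass.coe_finset_sum]
  have hterm : ∀ k ∈ (DirectSum.decompose 𝒩 n).support,
      ((DirectSum.decompose 𝒩 (x • ((DirectSum.decompose 𝒩 n k : 𝒩 k) : N)) m : 𝒩 m) : N)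
        = if k = m - i then x • ((DirectSum.decompose 𝒩 n k : 𝒩 k) : N) else 0 := by
    intro k _
    have hmem : x • ((DirectSum.decompose 𝒩 n k : 𝒩 k) : N) ∈ 𝒩 ((i : ℤ) + k) :=
      hcompat i k _ _ hx (SetLike.coe_mem _)
    by_cases hik : k = m - i
    · rw [if_pos hik]; subst hik
      have : (i : ℤ) + (m - i) = m := by ring
      rw [this] at hmem
      exact DirectSum.decompose_of_mem_same 𝒩 hmem
    · rw [if_neg hik]
      exact DirectSum.decompose_of_mem_ne 𝒩 hmem (by omega)
  rw [Finset.sum_congr rfl hterm]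
  rw [Finset.sum_ite_eq' (DirectSum.decompose 𝒩 n).support (m - i)
    (fun k => x • ((DirectSum.decompose 𝒩 n k : 𝒩 k) : N))]
  by_cases hmem : m - i ∈ (DirectSum.decompose 𝒩 n).support
  · rw [if_pos hmem]
  · rw [if_neg hmem]
    rw [DFinsupp.notMem_support_iff] at hmem
    rw [hmem]
    simp

include hcompat in
open Classical in
lemma comp_smul_gen (a : A) (n : N) (m : ℤ) :
    ((DirectSum.decompose 𝒩 (a • n) m : 𝒩 m) : N) =
      ∑ d ∈ (DirectSum.decompose 𝒜 a).support,
        ((DirectSum.decompose 𝒜 a d : 𝒜 d) : A) •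
          ((DirectSum.decompose 𝒩 n (m - d) : 𝒩 (m - (d : ℤ))) : N) := by
  conv_lhs => rw [show a • n = ∑ d ∈ (DirectSum.decompose 𝒜 a).support,
      ((DirectSum.decompose 𝒜 a d : 𝒜 d) : A) • n by
    rw [← Finset.sum_smul, DirectSum.sum_support_decompose]]
  rw [DirectSum.decompose_sum, DFinsupp.finset_sum_apply, AddSubmonoidClass.coe_finset_sum]
  exact Finset.sum_congr rfl fun d _ => comp_hom_smul hcompat (SetLike.coe_mem _) n m

include hcompat in
open Classical in
/-- Torsion lemma: if a nonzero `a` kills `n`, some nonzero homogeneous element kills `n`. -/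
lemma torsion_aux (a : A) (ha : a ≠ 0) :
    ∀ n : N, a • n = 0 → ∃ s ∈ homogeneousNonzero A 𝒜, s • n = 0 := by
  have hsupp : ∀ x : A, x ≠ 0 → (DirectSum.decompose 𝒜 x).support.Nonempty := by
    intro x hx
    rw [Finset.nonempty_iff_ne_empty]
    intro h
    apply hx
    conv_lhs => rw [← DirectSum.sum_support_decompose 𝒜 x, h, Finset.sum_empty]
  have hsuppN : ∀ x : N, x ≠ 0 → (DirectSum.decompose 𝒩 x).support.Nonempty := by
    intro x hx
    rw [Finset.nonempty_iff_ne_empty]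
    intro h
    apply hx
    conv_lhs => rw [← DirectSum.sum_support_decompose 𝒩 x, h, Finset.sum_empty]
  have key : ∀ (card : ℕ) (n : N), (DirectSum.decompose 𝒩 n).support.card = card →
      a • n = 0 → ∃ s ∈ homogeneousNonzero A 𝒜, s • n = 0 := by
    intro card
    induction card using Nat.strong_induction_on with
    | _ card IH =>
      intro n hcard han
      by_cases hn : n = 0
      · exact ⟨1, (homogeneousNonzero A 𝒜).one_mem, by simp [hn]⟩
      -- top degrees
      have hne := hsuppN n hn
      have hnea := hsupp a ha
      set J := (DirectSum.decompose 𝒩 n).support.max' hne with hJ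
      set D := (DirectSum.decompose 𝒜 a).support.max' hnea with hD
      set aD : A := ((DirectSum.decompose 𝒜 a D : 𝒜 D) : A) with haD
      have haDmem : aD ∈ 𝒜 D := SetLike.coe_mem _
      have haDne : aD ≠ 0 := by
        have := (DirectSum.decompose 𝒜 a).support.max'_mem hnea
        rw [DFinsupp.mem_support_iff] at this
        simpa [haD, ZeroMemClass.coe_eq_zero] using this
      -- top component of the relation : aD • n_J = 0
      have h1 : aD • ((DirectSum.decompose 𝒩 n J : 𝒩 (J : ℤ)) : N) = 0 := by
        have h0 : ((DirectSum.decompose 𝒩 (a • n) ((D : ℤ) + J) : 𝒩 ((D : ℤ) + J)) : N) = 0 := by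
          rw [han]; simp
        rw [comp_smul_gen hcompat] at h0
        rw [Finset.sum_eq_single_of_mem D ((DirectSum.decompose 𝒜 a).support.max'_mem hnea)] at h0
        · have heq : (D : ℤ) + J - D = J := by ring
          rw [heq] at h0
          exact h0
        · intro d hd hdD
          have hdle : d ≤ D := Finset.le_max' _ _ hd
          have : ((D : ℤ) + J - d) ∉ (DirectSum.decompose 𝒩 n).support := by
            intro hmem
            have := Finset.le_max' _ _ hmem
            omega
          rw [DFinsupp.notMem_support_iff] at this
          rw [this]
          simp
      -- pass to n' = aD • n
      set n' : N := aD • n with hn'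
      have hsub : (DirectSum.decompose 𝒩 n').support ⊆
          (((DirectSum.decompose 𝒩 n).support.image (fun j => (D : ℤ) + j)).erase ((D : ℤ) + J)) := by
        intro m hm
        rw [DFinsupp.mem_support_iff] at hm
        have hcomp := comp_hom_smul hcompat haDmem n m
        have hne0 : ((DirectSum.decompose 𝒩 n' m : 𝒩 m) : N) ≠ 0 := by
          simpa [ZeroMemClass.coe_eq_zero] using hm
        rw [hcomp] at hne0
        have hmemn : (m - D) ∈ (DirectSum.decompose 𝒩 n).support := by
          rw [DFinsupp.mem_support_iff]
          intro h
          apply hne0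
          rw [h]
          simp
        rw [Finset.mem_erase]
        constructor
        · intro h
          apply hne0
          have heq : m - (D : ℤ) = J := by omega
          rw [heq]
          exact h1
        · exact Finset.mem_image.mpr ⟨m - D, hmemn, by ring⟩
      have hcardlt : (DirectSum.decompose 𝒩 n').support.card < card := by
        have h2 : ((D : ℤ) + J) ∈ (DirectSum.decompose 𝒩 n).support.image (fun j => (D : ℤ) + j) :=
          Finset.mem_image.mpr ⟨J, (DirectSum.decompose 𝒩 n).support.max'_mem hne, rfl⟩
        calc (DirectSum.decompose 𝒩 n').support.card
            ≤ (((DirectSum.decompose 𝒩 n).support.image (fun j => (D : ℤ) + j)).erase ((D : ℤ) + J)).card :=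
              Finset.card_le_card hsub
          _ < ((DirectSum.decompose 𝒩 n).support.image (fun j => (D : ℤ) + j)).card :=
              Finset.card_erase_lt_of_mem h2
          _ ≤ (DirectSum.decompose 𝒩 n).support.card := Finset.card_image_le
          _ = card := hcard
      have han' : a • n' = 0 := by
        rw [hn', smul_smul, mul_comm, ← smul_smul, han, smul_zero]
      obtain ⟨s, hs, hsn'⟩ := IH _ hcardlt n' rfl han'
      refine ⟨s * aD, (homogeneousNonzero A 𝒜).mul_mem hs ⟨haDne, D, haDmem⟩, ?_⟩
      rw [mul_smul]
      exact hsn'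
  intro n han
  exact key _ n rfl han

open Classical in
private noncomputable def wdeg (𝒜 : ℕ → AddSubgroup A) [GradedRing 𝒜] (x : A) : ℕ :=
  if h : (DirectSum.decompose 𝒜 x).support.Nonempty
  then (DirectSum.decompose 𝒜 x).support.max' h - (DirectSum.decompose 𝒜 x).support.min' h
  else 0


open Classical in
lemma exists_gen (I : Ideal A) (a₀ : A) (ha₀I : a₀ ∈ I) (ha₀ : a₀ ≠ 0) :
    ∃ a ∈ I, a ≠ 0 ∧ ∀ c ∈ I, ∃ t ∈ homogeneousNonzero A 𝒜, a ∣ t * c := by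
  have hsupp : ∀ x : A, x ≠ 0 → (DirectSum.decompose 𝒜 x).support.Nonempty := by
    intro x hx
    rw [Finset.nonempty_iff_ne_empty]
    intro h
    apply hx
    conv_lhs => rw [← DirectSum.sum_support_decompose 𝒜 x, h, Finset.sum_empty]
  have hnotmem : ∀ (x : A) (k : ℕ), k ∉ (DirectSum.decompose 𝒜 x).support →
      ((DirectSum.decompose 𝒜 x k : 𝒜 k) : A) = 0 := by
    intro x k hk
    rw [DFinsupp.notMem_support_iff.mp hk, ZeroMemClass.coe_zero]
  have hwd : ∀ (x : A) (h : (DirectSum.decompose 𝒜 x).support.Nonempty),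
      wdeg 𝒜 x = (DirectSum.decompose 𝒜 x).support.max' h - (DirectSum.decompose 𝒜 x).support.min' h := by
    intro x h
    rw [wdeg, dif_pos h]
  have hex : ∃ w, ∃ a, a ∈ I ∧ a ≠ 0 ∧ wdeg 𝒜 a = w := ⟨wdeg 𝒜 a₀, a₀, ha₀I, ha₀, rfl⟩
  obtain ⟨a, haI, ha0, haw⟩ := Nat.find_spec hex
  have hmin : ∀ c ∈ I, c ≠ 0 → Nat.find hex ≤ wdeg 𝒜 c :=
    fun c hc hc0 => Nat.find_min' hex ⟨c, hc, hc0, rfl⟩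
  refine ⟨a, haI, ha0, ?_⟩
  have hnea := hsupp a ha0
  set D := (DirectSum.decompose 𝒜 a).support.max' hnea with hDdef
  set dd := (DirectSum.decompose 𝒜 a).support.min' hnea with hdddef
  set aD : A := ((DirectSum.decompose 𝒜 a D : 𝒜 D) : A) with haDdef
  have haDmem : aD ∈ 𝒜 D := SetLike.coe_mem _
  have haDne : aD ≠ 0 := by
    have := (DirectSum.decompose 𝒜 a).support.max'_mem hnea
    rw [DFinsupp.mem_support_iff] at this
    simpa [haDdef, ZeroMemClass.coe_eq_zero] using this
  have hdD : dd ≤ D := Finset.min'_le _ _ ((DirectSum.decompose 𝒜 a).support.max'_mem hnea)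
  have key : ∀ w, ∀ c ∈ I, wdeg 𝒜 c = w → ∃ t ∈ homogeneousNonzero A 𝒜, a ∣ t * c := by
    intro w
    induction w using Nat.strong_induction_on with
    | _ w IH =>
      intro c hcI hcw
      by_cases hc0 : c = 0
      · exact ⟨1, (homogeneousNonzero A 𝒜).one_mem, by simp [hc0]⟩
      have hnec := hsupp c hc0
      set E := (DirectSum.decompose 𝒜 c).support.max' hnec with hEdef
      set e := (DirectSum.decompose 𝒜 c).support.min' hnec with hedef
      set cE : A := ((DirectSum.decompose 𝒜 c E : 𝒜 E) : A) with hcEdef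
      have hcEmem : cE ∈ 𝒜 E := SetLike.coe_mem _
      have heE : e ≤ E := Finset.min'_le _ _ ((DirectSum.decompose 𝒜 c).support.max'_mem hnec)
      -- width comparison from minimality
      have hwcmp : D + e ≤ E + dd := by
        have h1 : Nat.find hex ≤ wdeg 𝒜 c := hmin c hcI hc0
        rw [← haw, hwd a hnea, hwd c hnec] at h1
        omega
      set r : A := aD * c - cE * a with hrdef
      have hrI : r ∈ I := sub_mem (I.mul_mem_left aD hcI) (I.mul_mem_left cE haI)
      by_cases hr0 : r = 0
      · refine ⟨aD, ⟨haDne, D, haDmem⟩, cE, ?_⟩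
        have h := sub_eq_zero.mp hr0
        linear_combination h
      · have hcomp : ∀ m : ℕ, ((DirectSum.decompose 𝒜 r m : 𝒜 m) : A) =
            (if _ : D ≤ m then aD * ((DirectSum.decompose 𝒜 c (m - D) : 𝒜 (m - D)) : A) else 0)
            - (if _ : E ≤ m then cE * ((DirectSum.decompose 𝒜 a (m - E) : 𝒜 (m - E)) : A) else 0) := by
          intro m
          rw [hrdef, DirectSum.decompose_sub, DFinsupp.sub_apply, AddSubgroupClass.coe_sub,
            comp_hom_mul haDmem, comp_hom_mul hcEmem]
        have hub : ∀ m ∈ (DirectSum.decompose 𝒜 r).support, m < D + E := by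
          intro m hm
          by_contra h
          push_neg at h
          rw [DFinsupp.mem_support_iff] at hm
          apply hm
          rw [← ZeroMemClass.coe_eq_zero, hcomp m]
          by_cases hm' : m = D + E
          · subst hm'
            rw [dif_pos (by omega), dif_pos (by omega)]
            have h1 : D + E - D = E := by omega
            have h2 : D + E - E = D := by omega
            rw [h1, h2, ← hcEdef, ← haDdef]
            ring
          · rw [dif_pos (by omega), dif_pos (by omega),
              hnotmem c (m - D) (fun hmem => by have := Finset.le_max' _ _ hmem; omega),
              hnotmem a (m - E) (fun hmem => by have := Finset.le_max' _ _ hmem; omega)]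
            ring
        have hlb : ∀ m ∈ (DirectSum.decompose 𝒜 r).support, D + e ≤ m := by
          intro m hm
          by_contra h
          push_neg at h
          rw [DFinsupp.mem_support_iff] at hm
          apply hm
          rw [← ZeroMemClass.coe_eq_zero, hcomp m]
          have hz1 : (if _ : D ≤ m then aD * ((DirectSum.decompose 𝒜 c (m - D) : 𝒜 (m - D)) : A) else 0) = 0 := by
            by_cases hDm : D ≤ m
            · rw [dif_pos hDm, hnotmem c (m - D)
                (fun hmem => by have := Finset.min'_le _ _ hmem; omega), mul_zero]
            · rw [dif_neg hDm]
          have hz2 : (if _ : E ≤ m then cE * ((DirectSum.decompose 𝒜 a (m - E) : 𝒜 (m - E)) : A) else 0) = 0 := by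
            by_cases hEm : E ≤ m
            · rw [dif_pos hEm, hnotmem a (m - E)
                (fun hmem => by have := Finset.min'_le _ _ hmem; omega), mul_zero]
            · rw [dif_neg hEm]
          rw [hz1, hz2, sub_zero]
        have hner := hsupp r hr0
        have hwr : wdeg 𝒜 r < w := by
          have h1 := hub _ ((DirectSum.decompose 𝒜 r).support.max'_mem hner)
          have h2 := hlb _ ((DirectSum.decompose 𝒜 r).support.min'_mem hner)
          have h3 : (DirectSum.decompose 𝒜 r).support.min' hner ≤
              (DirectSum.decompose 𝒜 r).support.max' hner :=
            Finset.min'_le _ _ ((DirectSum.decompose 𝒜 r).support.max'_mem hner)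
          rw [hwd r hner, ← hcw, hwd c hnec, ← hEdef, ← hedef]
          omega
        obtain ⟨t, ht, p, hp⟩ := IH (wdeg 𝒜 r) hwr r hrI rfl
        refine ⟨t * aD, (homogeneousNonzero A 𝒜).mul_mem ht ⟨haDne, D, haDmem⟩, p + t * cE, ?_⟩
        rw [hrdef] at hp
        linear_combination hp
  intro c hcI
  exact key (wdeg 𝒜 c) c hcI rfl

lemma hNZD : homogeneousNonzero A 𝒜 ≤ nonZeroDivisors A :=
  fun s hs => mem_nonZeroDivisors_of_ne_zero hs.1

include hcompat in
/-- `S⁻¹N` is torsion-free over `S⁻¹A`. -/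
lemma tf_loc (b : Localization (homogeneousNonzero A 𝒜))
    (m : LocalizedModule (homogeneousNonzero A 𝒜) N) (hb : b ≠ 0) (hbm : b • m = 0) :
    m = 0 := by
  obtain ⟨x, s, rfl⟩ := IsLocalization.exists_mk'_eq (homogeneousNonzero A 𝒜) b
  induction m using LocalizedModule.induction_on with
  | _ n u =>
    rw [← Localization.mk_eq_mk', LocalizedModule.mk_smul_mk] at hbm
    have hx : x ≠ 0 := by
      rintro rfl
      exact hb (IsLocalization.mk'_zero _)
    have h0 : LocalizedModule.mk (x • n) (s * u) = LocalizedModule.mk (0 : N) 1 := by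
      rw [hbm, LocalizedModule.zero_mk]
    rw [LocalizedModule.mk_eq] at h0
    obtain ⟨v, hv⟩ := h0
    have hv' : ((v : A) * x) • n = 0 := by
      have : (v : A) • ((1 : homogeneousNonzero A 𝒜) : A) • (x • n) = 0 := by
        simpa [Submonoid.smul_def, smul_zero] using hv
    
      simpa [one_smul, mul_smul] using this
    have hvx : (v : A) * x ≠ 0 := mul_ne_zero v.2.1 hx
    obtain ⟨s', hs', hsn⟩ := torsion_aux hcompat _ hvx n hv'
    have : LocalizedModule.mk n u =
        LocalizedModule.mk ((⟨s', hs'⟩ : homogeneousNonzero A 𝒜) • n)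
          (⟨s', hs'⟩ * u) := (LocalizedModule.mk_cancel_common_left _ _ _).symm
    rw [this, Submonoid.smul_def, hsn, LocalizedModule.zero_mk]

/-- Every ideal of `S⁻¹A` is principal. -/
lemma principal_loc (J : Ideal (Localization (homogeneousNonzero A 𝒜))) :
    J = ⊥ ∨ ∃ b : Localization (homogeneousNonzero A 𝒜), b ≠ 0 ∧ J = Ideal.span {b} := by
  by_cases hJ : J = ⊥
  · exact Or.inl hJ
  right
  obtain ⟨b0, hb0J, hb0⟩ := Submodule.exists_mem_ne_zero_of_ne_bot hJ
  obtain ⟨x0, s0, hmk⟩ := IsLocalization.exists_mk'_eq (homogeneousNonzero A 𝒜) b0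
  have hx0I : x0 ∈ J.comap (algebraMap A (Localization (homogeneousNonzero A 𝒜))) := by
    show algebraMap A (Localization (homogeneousNonzero A 𝒜)) x0 ∈ J
    rw [← IsLocalization.mk'_spec (Localization (homogeneousNonzero A 𝒜)) x0 s0, hmk]
    exact J.mul_mem_right _ hb0J
  have hx0 : x0 ≠ 0 := by
    rintro rfl
    rw [IsLocalization.mk'_zero] at hmk
    exact hb0 hmk.symm
  obtain ⟨a, haI, ha0, hgen⟩ := exists_gen (𝒜 := 𝒜) _ x0 hx0I hx0
  refine ⟨algebraMap A (Localization (homogeneousNonzero A 𝒜)) a, ?_, ?_⟩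
  · intro h
    exact ha0 (IsLocalization.injective (Localization (homogeneousNonzero A 𝒜))
      (hNZD (𝒜 := 𝒜)) (by rw [h, map_zero]))
  · apply le_antisymm
    · intro b hbJ
      obtain ⟨c, s, hcs⟩ := IsLocalization.exists_mk'_eq (homogeneousNonzero A 𝒜) b
      have hcI : c ∈ J.comap (algebraMap A (Localization (homogeneousNonzero A 𝒜))) := by
        show algebraMap A (Localization (homogeneousNonzero A 𝒜)) c ∈ J
        rw [← IsLocalization.mk'_spec (Localization (homogeneousNonzero A 𝒜)) c s, hcs]
        exact J.mul_mem_right _ hbJ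
      obtain ⟨t, ht, p, hp⟩ := hgen c hcI
      rw [Ideal.mem_span_singleton]
      refine ⟨IsLocalization.mk' (Localization (homogeneousNonzero A 𝒜)) p
        ((⟨t, ht⟩ : homogeneousNonzero A 𝒜) * s), ?_⟩
      rw [← hcs]
      calc IsLocalization.mk' (Localization (homogeneousNonzero A 𝒜)) c s
          = IsLocalization.mk' (Localization (homogeneousNonzero A 𝒜))
              (c * ((⟨t, ht⟩ : homogeneousNonzero A 𝒜) : A))
              (s * (⟨t, ht⟩ : homogeneousNonzero A 𝒜)) :=
            (IsLocalization.mk'_cancel c s ⟨t, ht⟩).symm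
        _ = IsLocalization.mk' (Localization (homogeneousNonzero A 𝒜)) (a * p)
              ((⟨t, ht⟩ : homogeneousNonzero A 𝒜) * s) := by
            rw [mul_comm s]
            congr 1
            rw [mul_comm]
            exact hp
        _ = IsLocalization.mk' (Localization (homogeneousNonzero A 𝒜)) a 1 *
              IsLocalization.mk' (Localization (homogeneousNonzero A 𝒜)) p
                ((⟨t, ht⟩ : homogeneousNonzero A 𝒜) * s) := by
            rw [← IsLocalization.mk'_mul, one_mul]
        _ = algebraMap A (Localization (homogeneousNonzero A 𝒜)) a *
              IsLocalization.mk' (Localization (homogeneousNonzero A 𝒜)) p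
                ((⟨t, ht⟩ : homogeneousNonzero A 𝒜) * s) := by
            rw [IsLocalization.mk'_one]
    · rw [Ideal.span_le, Set.singleton_subset_iff]
      show algebraMap A (Localization (homogeneousNonzero A 𝒜)) a ∈ J
      exact haI

include hcompat in
lemma flat_over_loc :
    Module.Flat (Localization (homogeneousNonzero A 𝒜))
      (LocalizedModule (homogeneousNonzero A 𝒜) N) := by
  rw [Module.Flat.iff_rTensor_injective']
  intro J
  rcases principal_loc J with hJ | ⟨b, hb, hJ⟩
  · subst hJ
    haveI : Subsingleton (⊥ : Ideal (Localization (homogeneousNonzero A 𝒜))) :=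
      ⟨fun a b => Subtype.ext (by rw [Ideal.mem_bot.mp a.2, Ideal.mem_bot.mp b.2])⟩
    have hzero : ∀ z : (⊥ : Ideal (Localization (homogeneousNonzero A 𝒜)))
        ⊗[Localization (homogeneousNonzero A 𝒜)] (LocalizedModule (homogeneousNonzero A 𝒜) N),
        z = 0 := by
      intro z
      have hid : (LinearMap.id : (⊥ : Ideal (Localization (homogeneousNonzero A 𝒜))) →ₗ[Localization (homogeneousNonzero A 𝒜)] (⊥ : Ideal (Localization (homogeneousNonzero A 𝒜)))) = 0 :=
        Subsingleton.elim _ _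
      calc z = LinearMap.rTensor (LocalizedModule (homogeneousNonzero A 𝒜) N)
            (LinearMap.id) z := by rw [LinearMap.rTensor_id]; rfl
        _ = LinearMap.rTensor (LocalizedModule (homogeneousNonzero A 𝒜) N) 0 z := by rw [hid]
        _ = 0 := by rw [LinearMap.rTensor_zero]; rfl
    intro x y _
    rw [hzero x, hzero y]
  · subst hJ
    have hbmem : b ∈ Ideal.span {b} := Ideal.subset_span rfl
    have hesurj : Function.Surjective
        (LinearMap.toSpanSingleton (Localization (homogeneousNonzero A 𝒜))
          (Ideal.span {b} : Ideal (Localization (homogeneousNonzero A 𝒜))) ⟨b, hbmem⟩) := by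
      rintro ⟨y, hy⟩
      rw [Ideal.mem_span_singleton'] at hy
      obtain ⟨r, hr⟩ := hy
      refine ⟨r, Subtype.ext ?_⟩
      simp only [LinearMap.toSpanSingleton_apply, SetLike.mk_smul_mk, smul_eq_mul]
      exact hr
    have hcomp : (Ideal.span {b} : Ideal (Localization (homogeneousNonzero A 𝒜))).subtype ∘ₗ
        (LinearMap.toSpanSingleton (Localization (homogeneousNonzero A 𝒜)) _ ⟨b, hbmem⟩)
        = LinearMap.toSpanSingleton (Localization (homogeneousNonzero A 𝒜))
            (Localization (homogeneousNonzero A 𝒜)) b := by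
      rfl
    have hinj2 : Function.Injective
        (LinearMap.rTensor (LocalizedModule (homogeneousNonzero A 𝒜) N)
          (LinearMap.toSpanSingleton (Localization (homogeneousNonzero A 𝒜))
            (Localization (homogeneousNonzero A 𝒜)) b)) := by
      have heq : LinearMap.rTensor (LocalizedModule (homogeneousNonzero A 𝒜) N)
          (LinearMap.toSpanSingleton (Localization (homogeneousNonzero A 𝒜))
            (Localization (homogeneousNonzero A 𝒜)) b)
          = b • LinearMap.id := by
        apply TensorProduct.ext'
        intro r m
        simp only [LinearMap.rTensor_tmul, LinearMap.toSpanSingleton_apply,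
          LinearMap.smul_apply, LinearMap.id_apply, TensorProduct.smul_tmul',
          smul_eq_mul, mul_comm]
      rw [heq]
      intro x y hxy
      simp only [LinearMap.smul_apply, LinearMap.id_apply] at hxy
      have hsub : b • (x - y) = 0 := by rw [smul_sub, hxy, sub_self]
      have hL := map_smul (TensorProduct.lid (Localization (homogeneousNonzero A 𝒜))
        (LocalizedModule (homogeneousNonzero A 𝒜) N)) b (x - y)
      have h0 := tf_loc hcompat b
        ((TensorProduct.lid (Localization (homogeneousNonzero A 𝒜))
          (LocalizedModule (homogeneousNonzero A 𝒜) N)) (x - y)) hb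
        (by rw [← hL, hsub, map_zero])
      have hxyz : x - y = 0 := by
        apply (TensorProduct.lid (Localization (homogeneousNonzero A 𝒜))
          (LocalizedModule (homogeneousNonzero A 𝒜) N)).injective
        rw [h0, map_zero]
      exact sub_eq_zero.mp hxyz
    have hsurj' := LinearMap.rTensor_surjective
      (LocalizedModule (homogeneousNonzero A 𝒜) N) hesurj
    intro x y hxy
    obtain ⟨x', rfl⟩ := hsurj' x
    obtain ⟨y', rfl⟩ := hsurj' y
    have hcompapp : LinearMap.rTensor (LocalizedModule (homogeneousNonzero A 𝒜) N)
          ((Ideal.span {b} : Ideal (Localization (homogeneousNonzero A 𝒜))).subtype ∘ₗ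
            (LinearMap.toSpanSingleton (Localization (homogeneousNonzero A 𝒜)) _ ⟨b, hbmem⟩)) x'
        = LinearMap.rTensor (LocalizedModule (homogeneousNonzero A 𝒜) N)
          ((Ideal.span {b} : Ideal (Localization (homogeneousNonzero A 𝒜))).subtype ∘ₗ
            (LinearMap.toSpanSingleton (Localization (homogeneousNonzero A 𝒜)) _ ⟨b, hbmem⟩)) y' := by
      rw [LinearMap.rTensor_comp]
      exact hxy
    rw [hcomp] at hcompapp
    rw [hinj2 hcompapp]


end Aux

/-- **Flatness of the localization of a graded module at the nonzero homogeneous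
elements.**  Let `A` be an ℕ-graded integral domain, `S` the multiplicative submonoid of
nonzero homogeneous elements, and `N` an `A`-module with a compatible ℤ-grading.  Then
`S⁻¹N` is a flat `A`-module. -/
theorem stmt14 (A : Type*) [CommRing A] [IsDomain A]
    (𝒜 : ℕ → AddSubgroup A) [GradedRing 𝒜]
    (N : Type*) [AddCommGroup N] [Module A N]
    (𝒩 : ℤ → AddSubgroup N) [DirectSum.Decomposition 𝒩]
    (hcompat : ∀ (i : ℕ) (j : ℤ) (a : A) (n : N),
      a ∈ 𝒜 i → n ∈ 𝒩 j → a • n ∈ 𝒩 ((i : ℤ) + j)) :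
    Module.Flat A (LocalizedModule (homogeneousNonzero A 𝒜) N) := by
  haveI := flat_over_loc hcompat
  exact Module.Flat.trans A (Localization (homogeneousNonzero A 𝒜))
    (LocalizedModule (homogeneousNonzero A 𝒜) N)
end

section
/- Let R be a commutative integral domain with field of fractions Q. Then for every R-module N, the R-module Q ⊗_R N is both flat and injective (injective as an object of the category of R-modules, equivalently by Baer's criterion). -/
open scoped TensorProduct

set_option synthInstance.maxHeartbeats 1000000 in
lemma stmt15_flat (R : Type*) [CommRing R] [IsDomain R]
    (N : Type*) [AddCommGroup N] [Module R N] :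
    Module.Flat R (FractionRing R ⊗[R] N) :=
  have : Module.Flat (FractionRing R) (FractionRing R ⊗[R] N) := inferInstance
  Module.Flat.trans R (FractionRing R) (FractionRing R ⊗[R] N)

lemma stmt15_inj (R : Type*) [CommRing R] [IsDomain R]
    (N : Type*) [AddCommGroup N] [Module R N] :
    Module.Injective R (FractionRing R ⊗[R] N) := by
  apply Module.Baer.injective
  intro I g
  by_cases hI : I = ⊥
  · refine ⟨0, fun x mem => ?_⟩
    subst hI
    simp only [Ideal.mem_bot] at mem
    subst mem
    simp only [LinearMap.zero_apply]
    rw [show (⟨(0:R), Ideal.zero_mem ⊥⟩ : (⊥ : Ideal R)) = 0 from rfl, map_zero]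
  · obtain ⟨a, haI, ha⟩ := Submodule.exists_mem_ne_zero_of_ne_bot hI
    set Q := FractionRing R
    have haQ : algebraMap R Q a ≠ 0 := fun h =>
      ha <| IsFractionRing.injective R Q (by rw [map_zero]; exact h)
    set c : Q ⊗[R] N := (algebraMap R Q a)⁻¹ • g ⟨a, haI⟩ with hc
    refine ⟨LinearMap.toSpanSingleton R _ c, fun x mem => ?_⟩
    have key : a • g ⟨x, mem⟩ = x • g ⟨a, haI⟩ := by
      rw [← map_smul, ← map_smul]
      congr 1
      ext
      simp [mul_comm]
    rw [LinearMap.toSpanSingleton_apply, hc, smul_comm, ← key, ← algebraMap_smul Q a,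
      smul_smul, inv_mul_cancel₀ haQ, one_smul]

/-- **Flatness and injectivity of `Q ⊗_R N`.**  Let `R` be a commutative integral domain
with field of fractions `Q`.  Then for every `R`-module `N`, the `R`-module `Q ⊗[R] N` is
both flat and injective. -/
theorem stmt15 (R : Type*) [CommRing R] [IsDomain R]
    (N : Type*) [AddCommGroup N] [Module R N] :
    Module.Flat R (FractionRing R ⊗[R] N) ∧
    Module.Injective R (FractionRing R ⊗[R] N) := by
  exact ⟨stmt15_flat R N, stmt15_inj R N⟩
end
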